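/- Let $\alpha \geq 1$ and let $\theta$ be a random branching operator with offspring vectors $\mathbf{A}_{i;j}$ such that $\mathbb{E}\|\theta \circ \mathbf{k}\|^\alpha \leq \mu \|\mathbf{k}\|^\alpha$ for all $\|\mathbf{k}\| \geq k_0$, with $\mu < 1$. Let $\mathbf{Z}$ be a random vector with nonnegative integer components, independent of the $\mathbf{A}$'s. Then $\mathbb{E}\|\theta \circ \mathbf{Z}\|^\alpha \leq \mu\, \mathbb{E}\|\mathbf{Z}\|^\alpha + c_1\, \mathbb{E}\|\mathbf{Z}\|$, where $c_1 = \max_{\|\mathbf{k}\| < k_0} \mathbb{E}\|\theta\circ\mathbf{k}\|^\alpha$. -/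

import Mathlib

/-!
Conditioning on `Z = k` and using independence, `𝔼‖θ∘Z‖^α = ∑ₖ ℙ(Z = k) 𝔼‖θ∘k‖^α`. Each
`𝔼‖θ∘k‖^α` is at most `μ‖k‖^α` when `‖k‖ ≥ k₀`, at most `c₁ ≤ c₁‖k‖` when `0 < ‖k‖ < k₀`, and
vanishes when `k = 0`; summing against the law of `Z` gives the bound.
-/

open MeasureTheory ProbabilityTheory Finset
open scoped ENNReal

/-- `theta A k ω = ∑ j, ∑_{i < k j} A j i ω` is the branching operator with
offspring vectors `A j i : Ω → Fin d → ℕ`; `l`-th coordinate is the number of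
type-`l` offspring of the population `k`. -/
noncomputable def theta {Ω : Type*} {d : ℕ} (A : Fin d → ℕ → Ω → Fin d → ℕ)
    (k : Fin d → ℕ) (ω : Ω) : Fin d → ℕ :=
  fun l => ∑ j, ∑ i ∈ range (k j), A j i ω l

theorem lintegral_comp_eq_lintegral_map_of_indepFun {Ω β γ : Type*} [MeasurableSpace Ω]
    [MeasurableSpace β] [Countable β] [MeasurableSingletonClass β] [MeasurableSpace γ]
    {μ : Measure Ω} {Z : Ω → β} {W : Ω → γ} (hZ : Measurable Z) (hW : Measurable W)
    (hZW : IndepFun Z W μ) {F : β → γ → ℝ≥0∞} (hF : ∀ k, Measurable (F k)) :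
    ∫⁻ ω, F (Z ω) (W ω) ∂μ = ∫⁻ k, ∫⁻ ω, F k (W ω) ∂μ ∂μ.map Z := by
  have hdecomp : ∀ ω, F (Z ω) (W ω) = ∑' k, ({k} : Set β).indicator 1 (Z ω) * F k (W ω) := by
    intro ω
    rw [tsum_eq_single (Z ω) fun k hk => by simp [Ne.symm hk]]
    simp
  have hind : ∀ k, Measurable (({k} : Set β).indicator (1 : β → ℝ≥0∞)) :=
    fun _ => measurable_of_countable _
  have hfiber : ∀ k, ∫⁻ ω, ({k} : Set β).indicator 1 (Z ω) * F k (W ω) ∂μ =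
      (∫⁻ ω, F k (W ω) ∂μ) * μ.map Z {k} := by
    intro k
    rw [lintegral_mul_eq_lintegral_mul_lintegral_of_indepFun''
      (f := fun ω => ({k} : Set β).indicator 1 (Z ω)) (g := fun ω => F k (W ω))
      ((hind k).comp hZ).aemeasurable ((hF k).comp hW).aemeasurable (hZW.comp (hind k) (hF k)),
      ← lintegral_map (hind k) hZ, lintegral_indicator_one (measurableSet_singleton k), mul_comm]
  simp_rw [hdecomp]
  rw [lintegral_tsum (f := fun k ω => ({k} : Set β).indicator 1 (Z ω) * F k (W ω))
    fun k => (((hind k).comp hZ).mul ((hF k).comp hW)).aemeasurable, lintegral_countable']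
  exact tsum_congr hfiber

theorem le_mul_rpow_add_iSup_mul {β : Type*} {f : β → ℝ≥0∞} {n : β → ℕ} {a : ℝ≥0∞} {α : ℝ}
    {k₀ : ℕ} (hlarge : ∀ k, k₀ ≤ n k → f k ≤ a * (n k : ℝ≥0∞) ^ α)
    (hzero : ∀ k, n k = 0 → f k = 0) (k : β) :
    f k ≤ a * (n k : ℝ≥0∞) ^ α + (⨆ k' : {k' // n k' < k₀}, f k') * n k := by
  rcases le_or_gt k₀ (n k) with hk | hk
  · exact (hlarge k hk).trans le_self_add
  rcases Nat.eq_zero_or_pos (n k) with h0 | hpos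
  · simp [hzero k h0]
  calc f k ≤ ⨆ k' : {k' // n k' < k₀}, f k' :=
        le_iSup (fun k' : {k' // n k' < k₀} => f k') ⟨k, hk⟩
    _ ≤ (⨆ k' : {k' // n k' < k₀}, f k') * n k :=
        le_mul_of_one_le_right' (by exact_mod_cast hpos)
    _ ≤ _ := le_add_self

theorem measurable_theta {Ω : Type*} [MeasurableSpace Ω] {d : ℕ}
    {A : Fin d → ℕ → Ω → Fin d → ℕ} (hA : ∀ j i, Measurable (A j i)) (k : Fin d → ℕ) :
    Measurable (theta A k) :=
  measurable_pi_lambda _ fun l => Finset.measurable_sum _ fun j _ =>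
    Finset.measurable_sum _ fun i _ => (measurable_pi_apply l).comp (hA j i)

theorem theta_zero {Ω : Type*} {d : ℕ} (A : Fin d → ℕ → Ω → Fin d → ℕ) : theta A 0 = 0 := by
  ext
  simp [theta]

theorem theta_of_random_vector_moment_bound_general
    {Ω : Type*} [MeasureSpace Ω]
    (d : ℕ) (A : Fin d → ℕ → Ω → Fin d → ℕ)
    (hmeas : ∀ j i, Measurable (A j i))
    (α : ℝ) (hα : 1 ≤ α)
    (μ : ℝ) (k₀ : ℕ)
    (hcontr : ∀ k : Fin d → ℕ, k₀ ≤ ∑ j, k j →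
      ∫⁻ ω, ((∑ l, theta A k ω l : ℕ) : ℝ≥0∞) ^ α ∂ℙ ≤
        ENNReal.ofReal μ * ((∑ j, k j : ℕ) : ℝ≥0∞) ^ α)
    (c₁ : ℝ≥0∞)
    (hc₁ : c₁ = ⨆ k : {k : Fin d → ℕ // ∑ j, k j < k₀},
      ∫⁻ ω, ((∑ l, theta A k.1 ω l : ℕ) : ℝ≥0∞) ^ α ∂ℙ)
    (Z : Ω → Fin d → ℕ) (hZ : Measurable Z)
    (hindep : IndepFun Z (fun ω => fun j i => A j i ω) ℙ) :
    ∫⁻ ω, ((∑ l, theta A (Z ω) ω l : ℕ) : ℝ≥0∞) ^ α ∂ℙ ≤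
      ENNReal.ofReal μ * ∫⁻ ω, ((∑ j, Z ω j : ℕ) : ℝ≥0∞) ^ α ∂ℙ +
        c₁ * ∫⁻ ω, ((∑ j, Z ω j : ℕ) : ℝ≥0∞) ∂ℙ := by
  set I : (Fin d → ℕ) → ℝ≥0∞ := fun k => ∫⁻ ω, ((∑ l, theta A k ω l : ℕ) : ℝ≥0∞) ^ α ∂ℙ
  -- `theta A k ω` is, by definition, `theta` of the coordinate projections evaluated at the
  -- offspring array `fun j i => A j i ω`, which is independent of `Z`.
  have hconditioned : ∫⁻ ω, ((∑ l, theta A (Z ω) ω l : ℕ) : ℝ≥0∞) ^ α ∂ℙ =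
      ∫⁻ k, I k ∂Measure.map Z ℙ :=
    lintegral_comp_eq_lintegral_map_of_indepFun (F := fun k w =>
        ((∑ l, theta (fun j i w => w j i) k w l : ℕ) : ℝ≥0∞) ^ α) hZ
      (measurable_pi_lambda _ fun j => measurable_pi_lambda _ fun i => hmeas j i) hindep
      fun k => (measurable_of_countable fun v : Fin d → ℕ => ((∑ l, v l : ℕ) : ℝ≥0∞) ^ α).comp
        (measurable_theta (fun j i => (measurable_pi_apply i).comp (measurable_pi_apply j)) k)
  have hI : ∀ k,
      I k ≤ ENNReal.ofReal μ * ((∑ j, k j : ℕ) : ℝ≥0∞) ^ α + c₁ * (∑ j, k j : ℕ) := by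
    subst hc₁
    refine le_mul_rpow_add_iSup_mul hcontr fun k hk => ?_
    obtain rfl : k = 0 := funext fun j => Finset.sum_eq_zero_iff.1 hk j (mem_univ j)
    simp [I, theta_zero, ENNReal.zero_rpow_of_pos (zero_lt_one.trans_le hα)]
  calc ∫⁻ ω, ((∑ l, theta A (Z ω) ω l : ℕ) : ℝ≥0∞) ^ α ∂ℙ
      ≤ ∫⁻ k, ENNReal.ofReal μ * ((∑ j, k j : ℕ) : ℝ≥0∞) ^ α + c₁ * (∑ j, k j : ℕ)
          ∂Measure.map Z ℙ :=
        hconditioned ▸ lintegral_mono hI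
    _ = _ := by
      rw [lintegral_add_left (measurable_of_countable _), lintegral_const_mul _
        (measurable_of_countable _), lintegral_const_mul _ (measurable_of_countable _),
        lintegral_map (measurable_of_countable _) hZ, lintegral_map (measurable_of_countable _) hZ]

/-- If `𝔼‖θ∘k‖^α ≤ μ ‖k‖^α` for all `‖k‖ ≥ k₀` with `μ < 1`, and `Z` is a random
nonnegative-integer vector independent of the offspring variables, then
`𝔼‖θ∘Z‖^α ≤ μ 𝔼‖Z‖^α + c₁ 𝔼‖Z‖`, where `c₁ = max_{‖k‖ < k₀} 𝔼‖θ∘k‖^α`. -/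
theorem theta_of_random_vector_moment_bound
    {Ω : Type*} [MeasureSpace Ω] [IsProbabilityMeasure (ℙ : Measure Ω)]
    (d : ℕ) (A : Fin d → ℕ → Ω → Fin d → ℕ)
    (hmeas : ∀ j i, Measurable (A j i))
    (α : ℝ) (hα : 1 ≤ α)
    (μ : ℝ) (hμ0 : 0 ≤ μ) (hμ1 : μ < 1) (k₀ : ℕ)
    (hcontr : ∀ k : Fin d → ℕ, k₀ ≤ ∑ j, k j →
      ∫⁻ ω, ((∑ l, theta A k ω l : ℕ) : ℝ≥0∞) ^ α ∂ℙ ≤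
        ENNReal.ofReal μ * ((∑ j, k j : ℕ) : ℝ≥0∞) ^ α)
    (c₁ : ℝ≥0∞)
    (hc₁ : c₁ = ⨆ k : {k : Fin d → ℕ // ∑ j, k j < k₀},
      ∫⁻ ω, ((∑ l, theta A k.1 ω l : ℕ) : ℝ≥0∞) ^ α ∂ℙ)
    (Z : Ω → Fin d → ℕ) (hZ : Measurable Z)
    (hindep : IndepFun Z (fun ω => fun j i => A j i ω) ℙ) :
    ∫⁻ ω, ((∑ l, theta A (Z ω) ω l : ℕ) : ℝ≥0∞) ^ α ∂ℙ ≤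
      ENNReal.ofReal μ * ∫⁻ ω, ((∑ j, Z ω j : ℕ) : ℝ≥0∞) ^ α ∂ℙ +
        c₁ * ∫⁻ ω, ((∑ j, Z ω j : ℕ) : ℝ≥0∞) ∂ℙ :=
  theta_of_random_vector_moment_bound_general d A hmeas α hα μ k₀ hcontr c₁ hc₁ Z hZ hindep
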